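/- arXiv:2204.07814 — 2 statements merged into one kernel-verified Lean document; each statement's English description precedes it below -/
import Mathlib

section
/- Let (Y, ℬ) be a measurable space, (T_j)_{j≥1} measurable maps of Y to itself, and (μ_j)_{j≥0} Borel probability measures on Y satisfying the equivariance relations (T_{j+1})_* μ_j = μ_{j+1} for every j ≥ 0. For a measurable set U ⊆ Y and j ≥ 0 define the hitting time started at time j by R^{(j)}_U(x) := inf{ k ≥ 1 : (T_{j+k} ∘ ⋯ ∘ T_{j+1})(x) ∈ U }. Assume μ_j(U) > 0 for all j ≥ 1, and set c_j(k,U) := | μ_j(R^{(j)}_U > k | U) − μ_j(R^{(j)}_U > k) | where μ_j(A|U) := μ_j(A ∩ U)/μ_j(U), and c_j(U) := sup_{k≥0} c_j(k,U). Then for every k ≥ 1: | μ_0(R^{(0)}_U > k) − ∏_{j=1}^{k} (1 − μ_j(U)) | ≤ Σ_{j=1}^{k} μ_j(U) · c_j(k−j, U) · ∏_{i=1}^{j−1} (1 − μ_i(U)) ≤ Σ_{j=1}^{k} μ_j(U) · c_j(U). -/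
/-! A point survives `k + 1` steps after time `j` iff `T (j + 1)` maps it outside `U` into the
set of points surviving `k` steps after time `j + 1`. By equivariance, with
`S = {R^{(j+1)}_U > k}` and `p = μ_{j+1}(U)`,
`μ_j(R^{(j)}_U > k + 1) = μ_{j+1}(S \ U) = (1 - p) μ_{j+1}(S) - p (μ_{j+1}(S | U) - μ_{j+1}(S))`,
so each step multiplies by `1 - p` up to an error `p · c_{j+1}(k, U)`. Unrolling this recursion
from time `0`, the error committed at time `j` is multiplied by the factors `1 - μ_i(U)`, `i < j`. -/

open MeasureTheory Filter Set Topology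

noncomputable section

variable {Y : Type*}

/-- The composition `T_{j+k} ∘ ⋯ ∘ T_{j+1}` of a sequence of maps, started after time `j`. -/
def seqCompFrom (T : ℕ → Y → Y) (j : ℕ) : ℕ → Y → Y
  | 0 => id
  | k + 1 => T (j + k + 1) ∘ seqCompFrom T j k

/-- The event `{R^{(j)}_U > k}`: no entry into `U` within the first `k` steps after time `j`. -/
def survFrom (T : ℕ → Y → Y) (j : ℕ) (U : Set Y) (k : ℕ) : Set Y :=
  {x | ∀ i, 1 ≤ i → i ≤ k → seqCompFrom T j i x ∉ U}

/-- `c_j(k,U) = |μ_j(R^{(j)}_U > k | U) − μ_j(R^{(j)}_U > k)|`. -/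
def hitCoeff (T : ℕ → Y → Y) [MeasurableSpace Y] (μ : ℕ → Measure Y) (U : Set Y)
    (j k : ℕ) : ℝ :=
  |(μ j (survFrom T j U k ∩ U)).toReal / (μ j U).toReal - (μ j (survFrom T j U k)).toReal|


@[to_additive]
theorem Finset.prod_Icc_eq_prod_range_succ {M : Type*} [CommMonoid M] (f : ℕ → M) (k : ℕ) :
    ∏ j ∈ Finset.Icc 1 k, f j = ∏ i ∈ Finset.range k, f (i + 1) := by
  rw [← Finset.Ico_add_one_right_eq_Icc, Finset.prod_Ico_eq_prod_range, Nat.add_sub_cancel]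
  simp only [add_comm]

theorem abs_sub_prod_range_le {K : Type*} [Field K] [LinearOrder K] [IsStrictOrderedRing K]
    {q : ℕ → K} {e x : ℕ → ℕ → K} (hq : ∀ j, q j ≤ 1) (hx : ∀ j, x j 0 = 1)
    (hrec : ∀ j k, |x j (k + 1) - (1 - q j) * x (j + 1) k| ≤ q j * e j k) (k : ℕ) :
    |x 0 k - ∏ i ∈ Finset.range k, (1 - q i)| ≤
      ∑ i ∈ Finset.range k, q i * e i (k - 1 - i) * ∏ m ∈ Finset.range i, (1 - q m) := by
  induction k generalizing q e x with
  | zero => simp [hx]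
  | succ k ih =>
    have hshift := ih (q := fun j => q (j + 1)) (e := fun j => e (j + 1))
      (x := fun j => x (j + 1)) (fun j => hq _) (fun j => hx _) (fun j => hrec _)
    have hq0 : 0 ≤ 1 - q 0 := sub_nonneg.mpr (hq 0)
    have hsum : ∑ i ∈ Finset.range (k + 1), q i * e i (k + 1 - 1 - i) *
        ∏ m ∈ Finset.range i, (1 - q m) =
        (1 - q 0) * ∑ i ∈ Finset.range k, q (i + 1) * e (i + 1) (k - 1 - i) *
          ∏ m ∈ Finset.range i, (1 - q (m + 1)) + q 0 * e 0 k := by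
      rw [Finset.sum_range_succ', Finset.mul_sum]
      congr 1
      · refine Finset.sum_congr rfl fun i _ => ?_
        rw [Finset.prod_range_succ', show k + 1 - 1 - (i + 1) = k - 1 - i by omega]
        ring
      · simp
    rw [Finset.prod_range_succ', hsum]
    calc |x 0 (k + 1) - (∏ i ∈ Finset.range k, (1 - q (i + 1))) * (1 - q 0)|
        = |(1 - q 0) * (x 1 k - ∏ i ∈ Finset.range k, (1 - q (i + 1))) +
            (x 0 (k + 1) - (1 - q 0) * x 1 k)| := by ring_nf
      _ ≤ (1 - q 0) * |x 1 k - ∏ i ∈ Finset.range k, (1 - q (i + 1))| + q 0 * e 0 k := by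
        grw [abs_add_le, abs_mul, abs_of_nonneg hq0, hrec]
      _ ≤ _ := by grw [hshift]

lemma seqCompFrom_succ' (T : ℕ → Y → Y) (j k : ℕ) (x : Y) :
    seqCompFrom T j (k + 1) x = seqCompFrom T (j + 1) k (T (j + 1) x) := by
  induction k with
  | zero => rfl
  | succ k ih =>
    change T (j + (k + 1) + 1) (seqCompFrom T j (k + 1) x) = T (j + 1 + k + 1) _
    rw [ih, show j + (k + 1) + 1 = j + 1 + k + 1 by omega]

lemma survFrom_zero (T : ℕ → Y → Y) (j : ℕ) (U : Set Y) : survFrom T j U 0 = univ :=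
  eq_univ_of_forall fun _ _ hi hik => absurd (hi.trans hik) (by omega)

lemma survFrom_succ (T : ℕ → Y → Y) (j : ℕ) (U : Set Y) (k : ℕ) :
    survFrom T j U (k + 1) = T (j + 1) ⁻¹' (survFrom T (j + 1) U k \ U) := by
  ext x
  constructor
  · intro h
    refine ⟨fun i hi hik => ?_, h 1 le_rfl (by omega)⟩
    rw [← seqCompFrom_succ']
    exact h (i + 1) (by omega) (by omega)
  · rintro ⟨hsurv, hx⟩ (_ | i) hi hik
    · omega
    · rw [seqCompFrom_succ']
      rcases i with _ | i
      · exact hx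
      · exact hsurv (i + 1) (by omega) (by omega)

section

variable [MeasurableSpace Y] {T : ℕ → Y → Y}

lemma measurable_seqCompFrom (hT : ∀ j, Measurable (T j)) (j k : ℕ) :
    Measurable (seqCompFrom T j k) := by
  induction k with
  | zero => exact measurable_id
  | succ k ih => exact (hT _).comp ih

lemma measurableSet_survFrom (hT : ∀ j, Measurable (T j)) {U : Set Y} (hU : MeasurableSet U)
    (j k : ℕ) : MeasurableSet (survFrom T j U k) := by
  have : survFrom T j U k = ⋂ i ∈ Finset.Icc 1 k, seqCompFrom T j i ⁻¹' Uᶜ := by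
    ext x
    simp [survFrom]
  rw [this]
  exact .biInter (Finset.Icc 1 k).countable_toSet
    fun i _ => measurable_seqCompFrom hT j i hU.compl

variable {μ : ℕ → Measure Y} {U : Set Y}

lemma abs_measure_survFrom_succ_sub (hT : ∀ j, Measurable (T j))
    (hprob : ∀ j, IsProbabilityMeasure (μ j))
    (hequiv : ∀ j : ℕ, (μ j).map (T (j + 1)) = μ (j + 1)) (hU : MeasurableSet U) (j k : ℕ) :
    |(μ j (survFrom T j U (k + 1))).toReal -
        (1 - (μ (j + 1) U).toReal) * (μ (j + 1) (survFrom T (j + 1) U k)).toReal| =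
      (μ (j + 1) U).toReal * hitCoeff T μ U (j + 1) k := by
  set S := survFrom T (j + 1) U k
  have hS : MeasurableSet S := measurableSet_survFrom hT hU (j + 1) k
  have hsurv : (μ j (survFrom T j U (k + 1))).toReal =
      (μ (j + 1) S).toReal - (μ (j + 1) (S ∩ U)).toReal := by
    rw [survFrom_succ, ← Measure.map_apply (hT (j + 1)) (hS.diff hU), hequiv j]
    exact eq_sub_of_add_eq (measureReal_sdiff_add_inter hU)
  rw [hitCoeff, hsurv]
  rcases eq_or_ne (μ (j + 1) U).toReal 0 with hp | hp
  · have hSU : (μ (j + 1) (S ∩ U)).toReal = 0 :=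
      le_antisymm (hp ▸ measureReal_mono inter_subset_right) ENNReal.toReal_nonneg
    simp [hp, hSU]
  · rw [← abs_of_nonneg (ENNReal.toReal_nonneg (a := μ (j + 1) U)), ← abs_mul,
      abs_of_nonneg ENNReal.toReal_nonneg, ← abs_neg]
    congr 1
    field_simp
    ring

lemma hitCoeff_le_one (hprob : ∀ j, IsProbabilityMeasure (μ j)) (j k : ℕ) :
    hitCoeff T μ U j k ≤ 1 :=
  abs_sub_le_of_nonneg_of_le (div_nonneg ENNReal.toReal_nonneg ENNReal.toReal_nonneg)
    (div_le_one_of_le₀ (measureReal_mono inter_subset_right) ENNReal.toReal_nonneg)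
    ENNReal.toReal_nonneg measureReal_le_one

end

theorem stmt0_general [MeasurableSpace Y]
    (T : ℕ → Y → Y) (hT : ∀ j, Measurable (T j))
    (μ : ℕ → Measure Y) (hprob : ∀ j, IsProbabilityMeasure (μ j))
    (hequiv : ∀ j : ℕ, (μ j).map (T (j + 1)) = μ (j + 1))
    (U : Set Y) (hU : MeasurableSet U) :
    ∀ k : ℕ, 1 ≤ k →
      |(μ 0 (survFrom T 0 U k)).toReal -
          ∏ j ∈ Finset.Icc 1 k, (1 - (μ j U).toReal)| ≤
        ∑ j ∈ Finset.Icc 1 k, (μ j U).toReal * hitCoeff T μ U j (k - j) *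
          ∏ i ∈ Finset.Icc 1 (j - 1), (1 - (μ i U).toReal) ∧
      ∑ j ∈ Finset.Icc 1 k, (μ j U).toReal * hitCoeff T μ U j (k - j) *
          ∏ i ∈ Finset.Icc 1 (j - 1), (1 - (μ i U).toReal) ≤
        ∑ j ∈ Finset.Icc 1 k, (μ j U).toReal * (⨆ k' : ℕ, hitCoeff T μ U j k') := by
  intro k _
  refine ⟨?_, Finset.sum_le_sum fun j _ => ?_⟩
  · have hrange := abs_sub_prod_range_le (q := fun j => (μ (j + 1) U).toReal)
      (e := fun j => hitCoeff T μ U (j + 1)) (x := fun j k => (μ j (survFrom T j U k)).toReal)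
      (fun j => measureReal_le_one) (fun j => by simp [survFrom_zero])
      (fun j k => (abs_measure_survFrom_succ_sub hT hprob hequiv hU j k).le) k
    rw [Finset.prod_Icc_eq_prod_range_succ, Finset.sum_Icc_eq_sum_range_succ]
    refine hrange.trans_eq (Finset.sum_congr rfl fun i _ => ?_)
    rw [Nat.add_sub_cancel, Finset.prod_Icc_eq_prod_range_succ, Nat.sub_add_eq,
      Nat.sub_right_comm]
  · have hc : hitCoeff T μ U j (k - j) ≤ ⨆ k', hitCoeff T μ U j k' :=
      le_ciSup ⟨1, forall_mem_range.mpr (hitCoeff_le_one hprob j)⟩ _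
    have hprod : ∏ i ∈ Finset.Icc 1 (j - 1), (1 - (μ i U).toReal) ≤ 1 :=
      Finset.prod_le_one (fun i _ => sub_nonneg.mpr measureReal_le_one)
        (fun i _ => sub_le_self _ ENNReal.toReal_nonneg)
    calc _ ≤ (μ j U).toReal * hitCoeff T μ U j (k - j) :=
          mul_le_of_le_one_right (mul_nonneg ENNReal.toReal_nonneg (abs_nonneg _)) hprod
      _ ≤ _ := mul_le_mul_of_nonneg_left hc ENNReal.toReal_nonneg

theorem stmt0 [MeasurableSpace Y]
    (T : ℕ → Y → Y) (hT : ∀ j, Measurable (T j))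
    (μ : ℕ → Measure Y) (hprob : ∀ j, IsProbabilityMeasure (μ j))
    (hequiv : ∀ j : ℕ, (μ j).map (T (j + 1)) = μ (j + 1))
    (U : Set Y) (hU : MeasurableSet U)
    (hUpos : ∀ j, 1 ≤ j → 0 < μ j U) :
    ∀ k : ℕ, 1 ≤ k →
      |(μ 0 (survFrom T 0 U k)).toReal -
          ∏ j ∈ Finset.Icc 1 k, (1 - (μ j U).toReal)| ≤
        ∑ j ∈ Finset.Icc 1 k, (μ j U).toReal * hitCoeff T μ U j (k - j) *
          ∏ i ∈ Finset.Icc 1 (j - 1), (1 - (μ i U).toReal) ∧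
      ∑ j ∈ Finset.Icc 1 k, (μ j U).toReal * hitCoeff T μ U j (k - j) *
          ∏ i ∈ Finset.Icc 1 (j - 1), (1 - (μ i U).toReal) ≤
        ∑ j ∈ Finset.Icc 1 k, (μ j U).toReal * (⨆ k' : ℕ, hitCoeff T μ U j k') :=
  stmt0_general T hT μ hprob hequiv U hU
end
end

section
/- Let h : [0,1] → ℝ be a function of bounded variation with h(x) ≥ c > 0 for m-a.e. x and ∫_0^1 h dm = 1, where m is Lebesgue measure, and let ν := h·m. Fix x0 ∈ [0,1] and α > 0, and define φ(x) := |x − x0|^{−1/α}. Then the limit b := lim_{ε→0⁺} ε^{−1} ν({ x ∈ [0,1] : |x − x0| < ε }) exists and satisfies 0 < b < ∞, and moreover lim_{t→∞} t^α ν({ x : φ(x) > t }) = b. Consequently n ν({ φ > b_n }) → 1 for b_n := (bn)^{1/α}, so φ is regularly varying of index α with respect to ν with constant slowly varying function. -/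
open MeasureTheory Filter Set Topology

noncomputable section

/-- Lebesgue measure on `[0,1]`. -/
def mLeb : Measure ℝ := volume.restrict (Set.Icc 0 1)

/-- The observable `φ(x) = |x − x0|^{−1/α}`. -/
def phiObs (α x0 x : ℝ) : ℝ := |x - x0| ^ (-α⁻¹)

/-! Extending `h` by zero outside `[0,1]` gives an integrable density `g` of `ν` with respect
to Lebesgue measure. Since `h` has bounded variation, `g` has one-sided limits `L` and `R` at `x0`,
so by the fundamental theorem of calculus `ν(B_ε(x0)) = ∫_{x0-ε}^{x0+ε} g` behaves like
`(L + R) ε`; as `g ≥ c` a.e. on `[0,1]`, at least one of `L`, `R` is `≥ c`. Finally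
`{φ > t}` is the punctured ball of radius `t^{-α}`, which turns the small-ball asymptotics into the
tail asymptotics. -/

lemma tendsto_sub_div_of_hasDerivWithinAt_Iio_Ioi {F : ℝ → ℝ} {x L R : ℝ}
    (hL : HasDerivWithinAt F L (Iio x) x) (hR : HasDerivWithinAt F R (Ioi x) x) :
    Tendsto (fun ε => (F (x + ε) - F (x - ε)) / ε) (𝓝[>] 0) (𝓝 (L + R)) := by
  have hright : Tendsto (fun ε => x + ε) (𝓝[>] 0) (𝓝[>] x) := by
    have := (map_add_left_nhdsGT (c := x) (a := (0 : ℝ))).le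
    rwa [add_zero] at this
  have hleft : Tendsto (fun ε => x - ε) (𝓝[>] 0) (𝓝[<] x) := by
    refine tendsto_nhdsWithin_of_tendsto_nhds_of_eventually_within _ ?_ ?_
    · simpa using ((continuous_sub_left x).tendsto 0).mono_left nhdsWithin_le_nhds
    · filter_upwards [self_mem_nhdsWithin] with ε (hε : 0 < ε) using sub_lt_self x hε
  have hslopeL := ((hasDerivWithinAt_iff_tendsto_slope' self_notMem_Iio).1 hL).comp hleft
  have hslopeR := ((hasDerivWithinAt_iff_tendsto_slope' self_notMem_Ioi).1 hR).comp hright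
  refine (hslopeL.add hslopeR).congr' ?_
  filter_upwards [self_mem_nhdsWithin] with ε (hε : 0 < ε)
  simp only [Function.comp_apply, slope_def_field, add_sub_cancel_left, sub_sub_cancel_left]
  field_simp
  ring

lemma nhdsLE_inf_ae_le_nhdsLT (μ : Measure ℝ) [NullSingletonClass μ] (x : ℝ) :
    𝓝[≤] x ⊓ ae μ ≤ 𝓝[<] x := by
  refine le_inf (inf_le_left.trans nhdsWithin_le_nhds) (le_principal_iff.2 ?_)
  rw [← Iic_sdiff_right]
  exact inter_mem_inf self_mem_nhdsWithin (compl_mem_ae_iff.2 (measure_singleton x))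

lemma tendsto_intervalIntegral_sub_add_div {g : ℝ → ℝ} {x L R : ℝ} (hg : Integrable g)
    (hL : Tendsto g (𝓝[<] x) (𝓝 L)) (hR : Tendsto g (𝓝[>] x) (𝓝 R)) :
    Tendsto (fun ε => (∫ y in (x - ε)..(x + ε), g y) / ε) (𝓝[>] 0) (𝓝 (L + R)) := by
  have hmeas : ∀ l : Filter ℝ, StronglyMeasurableAtFilter g l :=
    fun _ => hg.aestronglyMeasurable.stronglyMeasurableAtFilter
  have hFL : HasDerivWithinAt (fun u => ∫ y in x..u, g y) L (Iio x) x :=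
    (intervalIntegral.integral_hasDerivWithinAt_of_tendsto_ae_right hg.intervalIntegrable
      (hmeas _) (hL.mono_left (nhdsLE_inf_ae_le_nhdsLT volume x))).mono Iio_subset_Iic_self
  have hFR : HasDerivWithinAt (fun u => ∫ y in x..u, g y) R (Ioi x) x :=
    (intervalIntegral.integral_hasDerivWithinAt_of_tendsto_ae_right hg.intervalIntegrable
      (hmeas _) (hR.mono_left inf_le_left)).mono Ioi_subset_Ici_self
  refine (tendsto_sub_div_of_hasDerivWithinAt_Iio_Ioi hFL hFR).congr fun ε => ?_
  rw [intervalIntegral.integral_interval_sub_left hg.intervalIntegrable hg.intervalIntegrable]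

lemma neBot_inf_ae_of_measure_ne_zero {α : Type*} [MeasurableSpace α] {l : Filter α}
    {μ : Measure α} (h : ∀ s ∈ l, μ s ≠ 0) : (l ⊓ ae μ).NeBot :=
  inf_neBot_iff.2 fun _ hs _ ht =>
    nonempty_of_measure_ne_zero (by rw [measure_inter_conull (mem_ae_iff.1 ht)]; exact h _ hs)

lemma le_of_tendsto_nhdsGT_of_ae_le {g : ℝ → ℝ} {x y c l : ℝ} (hxy : x < y)
    (hg : Tendsto g (𝓝[>] x) (𝓝 l)) (hc : ∀ᵐ z, z ∈ Ioo x y → c ≤ g z) : c ≤ l := by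
  have : (𝓝[>] x ⊓ ae (volume : Measure ℝ)).NeBot :=
    neBot_inf_ae_of_measure_ne_zero fun s hs hs0 => by
      obtain ⟨u, hxu, hsub⟩ := mem_nhdsGT_iff_exists_Ioo_subset.1 hs
      exact isOpen_Ioo.measure_ne_zero volume (nonempty_Ioo.2 hxu) (measure_mono_null hsub hs0)
  refine ge_of_tendsto (hg.mono_left (inf_le_left (b := ae volume))) ?_
  filter_upwards [mem_inf_of_left (Ioo_mem_nhdsGT hxy), mem_inf_of_right hc] with z hz hcz
    using hcz hz

lemma le_of_tendsto_nhdsLT_of_ae_le {g : ℝ → ℝ} {x y c l : ℝ} (hyx : y < x)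
    (hg : Tendsto g (𝓝[<] x) (𝓝 l)) (hc : ∀ᵐ z, z ∈ Ioo y x → c ≤ g z) : c ≤ l := by
  have : (𝓝[<] x ⊓ ae (volume : Measure ℝ)).NeBot :=
    neBot_inf_ae_of_measure_ne_zero fun s hs hs0 => by
      obtain ⟨u, hux, hsub⟩ := mem_nhdsLT_iff_exists_Ioo_subset.1 hs
      exact isOpen_Ioo.measure_ne_zero volume (nonempty_Ioo.2 hux) (measure_mono_null hsub hs0)
  refine ge_of_tendsto (hg.mono_left (inf_le_left (b := ae volume))) ?_
  filter_upwards [mem_inf_of_left (Ioo_mem_nhdsLT hyx), mem_inf_of_right hc] with z hz hcz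
    using hcz hz

lemma le_add_of_tendsto_nhdsLT_of_tendsto_nhdsGT {g : ℝ → ℝ} {a b c x L R : ℝ} (hab : a < b)
    (hx : x ∈ Icc a b) (hg0 : 0 ≤ᵐ[volume] g) (hgc : ∀ᵐ z, z ∈ Icc a b → c ≤ g z)
    (hL : Tendsto g (𝓝[<] x) (𝓝 L)) (hR : Tendsto g (𝓝[>] x) (𝓝 R)) : c ≤ L + R := by
  have hL0 := le_of_tendsto_nhdsLT_of_ae_le (c := 0) (sub_one_lt x) hL (hg0.mono fun _ hz _ => hz)
  have hR0 := le_of_tendsto_nhdsGT_of_ae_le (c := 0) (lt_add_one x) hR (hg0.mono fun _ hz _ => hz)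
  rcases hx.2.lt_or_eq with hxb | rfl
  · have := le_of_tendsto_nhdsGT_of_ae_le hxb hR
      (hgc.mono fun z hz hzI => hz ⟨hx.1.trans hzI.1.le, hzI.2.le⟩)
    linarith
  · have := le_of_tendsto_nhdsLT_of_ae_le hab hL
      (hgc.mono fun z hz hzI => hz (Ioo_subset_Icc_self hzI))
    linarith

lemma BoundedVariationOn.integrableOn_Icc {f : ℝ → ℝ} {a b : ℝ}
    (hf : BoundedVariationOn f (Icc a b)) : IntegrableOn f (Icc a b) := by
  obtain ⟨p, q, hp, hq, rfl⟩ := hf.locallyBoundedVariationOn.exists_monotoneOn_sub_monotoneOn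
  exact (hp.integrableOn_isCompact isCompact_Icc).sub (hq.integrableOn_isCompact isCompact_Icc)

lemma BoundedVariationOn.exists_tendsto_indicator_nhdsGT {f : ℝ → ℝ} {a b x : ℝ}
    (hf : BoundedVariationOn f (Icc a b)) (hax : a ≤ x) :
    ∃ l, Tendsto ((Icc a b).indicator f) (𝓝[>] x) (𝓝 l) := by
  rcases lt_or_ge x b with hxb | hbx
  · have hmem : Icc a b ∈ 𝓝[>] x := Icc_mem_nhdsGT_of_mem ⟨hax, hxb⟩
    obtain ⟨l, hl⟩ := hf.exists_tendsto_right x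
    rw [nhdsWithin_inter_of_mem hmem] at hl
    exact ⟨l, hl.congr' (eventually_of_mem hmem fun y hy => (indicator_of_mem hy f).symm)⟩
  · refine ⟨0, tendsto_const_nhds.congr' (eventually_of_mem self_mem_nhdsWithin fun y hy => ?_)⟩
    exact (indicator_of_notMem (fun hy' => (hbx.trans_lt hy).not_ge hy'.2) f).symm

lemma BoundedVariationOn.exists_tendsto_indicator_nhdsLT {f : ℝ → ℝ} {a b x : ℝ}
    (hf : BoundedVariationOn f (Icc a b)) (hxb : x ≤ b) :
    ∃ l, Tendsto ((Icc a b).indicator f) (𝓝[<] x) (𝓝 l) := by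
  rcases lt_or_ge a x with hax | hxa
  · have hmem : Icc a b ∈ 𝓝[<] x := Icc_mem_nhdsLT_of_mem ⟨hax, hxb⟩
    obtain ⟨l, hl⟩ := hf.exists_tendsto_left x
    rw [nhdsWithin_inter_of_mem hmem] at hl
    exact ⟨l, hl.congr' (eventually_of_mem hmem fun y hy => (indicator_of_mem hy f).symm)⟩
  · refine ⟨0, tendsto_const_nhds.congr' (eventually_of_mem self_mem_nhdsWithin fun y hy => ?_)⟩
    exact (indicator_of_notMem (fun hy' => (hy.trans_le hxa).not_ge hy'.1) f).symm

lemma restrict_withDensity_ofReal {α : Type*} [MeasurableSpace α] {μ : Measure α} {f : α → ℝ}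
    {s : Set α} (hs : MeasurableSet s) :
    (μ.restrict s).withDensity (fun x => ENNReal.ofReal (f x)) =
      μ.withDensity (fun x => ENNReal.ofReal (s.indicator f x)) := by
  rw [← withDensity_indicator hs]
  exact congrArg _ (indicator_comp_of_zero ENNReal.ofReal_zero)

lemma toReal_withDensity_ofReal_apply {α : Type*} [MeasurableSpace α] {μ : Measure α}
    {g : α → ℝ} (hg : AEStronglyMeasurable g μ) (hg0 : 0 ≤ᵐ[μ] g) {s : Set α}
    (hs : MeasurableSet s) :
    (μ.withDensity (fun x => ENNReal.ofReal (g x)) s).toReal = ∫ x in s, g x ∂μ := by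
  rw [withDensity_apply _ hs,
    integral_eq_lintegral_of_nonneg_ae (ae_restrict_of_ae hg0) hg.restrict]

lemma setOf_phiObs_gt {α x0 t : ℝ} (hα : 0 < α) (ht : 0 < t) :
    {x | phiObs α x0 x > t} = {x | |x - x0| < t ^ (-α)} \ {x0} := by
  ext x
  rcases eq_or_ne x x0 with rfl | hne
  · simp [phiObs, Real.zero_rpow (neg_ne_zero.2 (inv_ne_zero hα.ne')), ht.not_gt]
  · have hr : 0 < |x - x0| := abs_pos.2 (sub_ne_zero.2 hne)
    simp only [phiObs, Set.mem_ofPred_eq, Set.mem_sdiff, mem_singleton_iff, hne,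
      not_false_eq_true, and_true, gt_iff_lt, ← inv_neg]
    exact Real.lt_rpow_inv_iff_of_neg ht hr (neg_lt_zero.2 hα)

lemma tendsto_rpow_mul_measure_phiObs_gt {μ : Measure ℝ} {x0 α b : ℝ} (hα : 0 < α)
    (hμ : μ {x0} = 0)
    (hb : Tendsto (fun ε => (μ {x | |x - x0| < ε}).toReal / ε) (𝓝[>] 0) (𝓝 b)) :
    Tendsto (fun t => t ^ α * (μ {x | phiObs α x0 x > t}).toReal) atTop (𝓝 b) := by
  have hradius : Tendsto (fun t : ℝ => t ^ (-α)) atTop (𝓝[>] 0) :=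
    tendsto_nhdsWithin_of_tendsto_nhds_of_eventually_within _ (tendsto_rpow_neg_atTop hα)
      ((eventually_gt_atTop 0).mono fun t ht => Real.rpow_pos_of_pos ht _)
  refine (hb.comp hradius).congr' ?_
  filter_upwards [eventually_gt_atTop 0] with t ht
  rw [Function.comp_apply, setOf_phiObs_gt hα ht, measure_sdiff_null hμ, Real.rpow_neg ht.le,
    div_inv_eq_mul, mul_comm]

lemma tendsto_natCast_mul_of_tendsto_rpow_mul {F : ℝ → ℝ} {α b : ℝ} (hα : 0 < α) (hb : 0 < b)
    (hF : Tendsto (fun t => t ^ α * F t) atTop (𝓝 b)) :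
    Tendsto (fun n : ℕ => (n : ℝ) * F ((b * n) ^ α⁻¹)) atTop (𝓝 1) := by
  have hseq : Tendsto (fun n : ℕ => (b * n) ^ α⁻¹) atTop atTop :=
    (tendsto_rpow_atTop (inv_pos.2 hα)).comp (tendsto_natCast_atTop_atTop.const_mul_atTop hb)
  have := (hF.comp hseq).const_mul b⁻¹
  rw [inv_mul_cancel₀ hb.ne'] at this
  refine this.congr fun n => ?_
  rw [Function.comp_apply, Real.rpow_inv_rpow (by positivity) hα.ne']
  field_simp

theorem stmt16_general (h : ℝ → ℝ)
    (hBV : BoundedVariationOn h (Set.Icc 0 1))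
    (c : ℝ) (hc : 0 < c) (hlow : ∀ᵐ x ∂mLeb, c ≤ h x)
    (ν : Measure ℝ) (hν : ν = mLeb.withDensity (fun x => ENNReal.ofReal (h x)))
    (x0 : ℝ) (hx0 : x0 ∈ Set.Icc (0 : ℝ) 1) (α : ℝ) (hα : 0 < α) :
    ∃ b : ℝ, 0 < b ∧
      -- the limit `b = lim_{ε→0⁺} ε⁻¹ ν(B_ε(x0))` exists and is positive and finite
      Tendsto (fun ε : ℝ => (ν {x | |x - x0| < ε}).toReal / ε) (𝓝[>] (0 : ℝ)) (𝓝 b) ∧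
      -- `t^α ν(φ > t) → b`, i.e. `φ` is regularly varying of index `α` w.r.t. `ν`
      Tendsto (fun t : ℝ => t ^ α * (ν {x | phiObs α x0 x > t}).toReal) atTop (𝓝 b) ∧
      -- consequently `n ν(φ > b_n) → 1` for `b_n = (bn)^{1/α}`
      Tendsto (fun n : ℕ =>
        (n : ℝ) * (ν {x | phiObs α x0 x > (b * (n : ℝ)) ^ α⁻¹}).toReal) atTop (𝓝 1) := by
  set g := (Icc (0 : ℝ) 1).indicator h with hg
  have hνg : ν = volume.withDensity (fun x => ENNReal.ofReal (g x)) :=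
    hν.trans (restrict_withDensity_ofReal measurableSet_Icc)
  have hg_int : Integrable g := (integrable_indicator_iff measurableSet_Icc).2 hBV.integrableOn_Icc
  have hg_low : ∀ᵐ x, x ∈ Icc (0 : ℝ) 1 → c ≤ g x := by
    filter_upwards [(ae_restrict_iff' measurableSet_Icc).1 hlow] with x hx hxI
    rw [hg, indicator_of_mem hxI]
    exact hx hxI
  have hg_nonneg : 0 ≤ᵐ[volume] g := by
    filter_upwards [hg_low] with x hx
    by_cases hxI : x ∈ Icc (0 : ℝ) 1
    · exact hc.le.trans (hx hxI)
    · simp [hg, indicator_of_notMem hxI]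
  obtain ⟨L, hL⟩ := hBV.exists_tendsto_indicator_nhdsLT hx0.2
  obtain ⟨R, hR⟩ := hBV.exists_tendsto_indicator_nhdsGT hx0.1
  have hball : Tendsto (fun ε => (ν {x | |x - x0| < ε}).toReal / ε) (𝓝[>] 0) (𝓝 (L + R)) := by
    refine (tendsto_intervalIntegral_sub_add_div hg_int hL hR).congr' ?_
    filter_upwards [self_mem_nhdsWithin] with ε (hε : 0 < ε)
    rw [show {x | |x - x0| < ε} = Ioo (x0 - ε) (x0 + ε) from Real.ball_eq_Ioo x0 ε, hνg,
      toReal_withDensity_ofReal_apply hg_int.aestronglyMeasurable hg_nonneg measurableSet_Ioo,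
      intervalIntegral.integral_of_le (by linarith), integral_Ioc_eq_integral_Ioo]
  have hatom : ν {x0} = 0 := hνg ▸ withDensity_absolutelyContinuous _ _ (measure_singleton x0)
  have htail := tendsto_rpow_mul_measure_phiObs_gt hα hatom hball
  have hb : 0 < L + R := hc.trans_le (le_add_of_tendsto_nhdsLT_of_tendsto_nhdsGT zero_lt_one hx0
    hg_nonneg hg_low hL hR)
  exact ⟨L + R, hb, hball, htail, tendsto_natCast_mul_of_tendsto_rpow_mul hα hb htail⟩

theorem stmt16 (h : ℝ → ℝ) (hmeas : Measurable h)
    (hBV : BoundedVariationOn h (Set.Icc 0 1))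
    (c : ℝ) (hc : 0 < c) (hlow : ∀ᵐ x ∂mLeb, c ≤ h x)
    (hint : ∫ x, h x ∂mLeb = 1)
    (ν : Measure ℝ) (hν : ν = mLeb.withDensity (fun x => ENNReal.ofReal (h x)))
    (x0 : ℝ) (hx0 : x0 ∈ Set.Icc (0 : ℝ) 1) (α : ℝ) (hα : 0 < α) :
    ∃ b : ℝ, 0 < b ∧
      -- the limit `b = lim_{ε→0⁺} ε⁻¹ ν(B_ε(x0))` exists and is positive and finite
      Tendsto (fun ε : ℝ => (ν {x | |x - x0| < ε}).toReal / ε) (𝓝[>] (0 : ℝ)) (𝓝 b) ∧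
      -- `t^α ν(φ > t) → b`, i.e. `φ` is regularly varying of index `α` w.r.t. `ν`
      Tendsto (fun t : ℝ => t ^ α * (ν {x | phiObs α x0 x > t}).toReal) atTop (𝓝 b) ∧
      -- consequently `n ν(φ > b_n) → 1` for `b_n = (bn)^{1/α}`
      Tendsto (fun n : ℕ =>
        (n : ℝ) * (ν {x | phiObs α x0 x > (b * (n : ℝ)) ^ α⁻¹}).toReal) atTop (𝓝 1) :=
  stmt16_general h hBV c hc hlow ν hν x0 hx0 α hα

end
end
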